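/- arXiv:0801.0532 — 2 statements merged into one kernel-verified Lean document; each statement's English description precedes it below -/
import Mathlib

section
/- Define the complexity of a surjection f: {1, …, m} → {1, …, n} as the maximum over pairs 1 ≤ i < j ≤ n of (the number of alternations between i and j in the subsequence of f consisting of values in {i,j}) minus 1. Then complexity is subadditive under operadic composition of surjections: the complexity of a composite Γ(f; g_1, …, g_n) is at most the value predicted by the complete graph operad composition, i.e., for indices in the same block r it is governed by the complexity of g_r, and for indices in distinct blocks r, s by the (r,s)-alternation number of f. -/
/-- The number of switches (alternations) in a list: the number of adjacent pairs of
distinct entries. -/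
def switches {α : Type*} [DecidableEq α] : List α → ℕ
  | [] => 0
  | [_] => 0
  | a :: b :: t => (if a = b then 0 else 1) + switches (b :: t)

/-- `altOn l i j` : the alternation number of `l` for the pair `{i, j}`: the number
of switches of the subsequence of `l` consisting of the values `i` and `j`. -/
def altOn {α : Type*} [DecidableEq α] (l : List α) (i j : α) : ℕ :=
  switches (l.filter (fun x => x == i || x == j))

/-- `Blowup l l'` : `l'` is obtained from `l` by replacing each entry by one or more
adjacent copies of itself (order preserved). -/
inductive Blowup {α : Type*} : List α → List α → Prop
  | nil : Blowup [] []
  | cons (a : α) (m : ℕ) {l l' : List α} :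
      Blowup l l' → Blowup (a :: l) (List.replicate (m + 1) a ++ l')

/-!
Repeating entries of a list does not change its number of switches, and filtering a
blowup gives a blowup, so alternation numbers are invariant under blowups. For `i, j`
in the same block `r`, the `{i, j}`-subsequence of `h` is that of its `r`-th block,
a blowup of `g r`. For `i, j` in distinct blocks, `β` is injective on `{i, j}`, so the
`{i, j}`-subsequence of `h` has as many switches as its image under `β`, which is a
sublist of the `{β i, β j}`-subsequence of `h.map β`, a blowup of that of `f`; and
the number of switches is monotone along sublists.
-/

section Switches

variable {α : Type*} [DecidableEq α]

theorem switches_cons_le_add (a b : α) (l : List α) :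
    switches (a :: l) ≤ (if a = b then 0 else 1) + switches (b :: l) := by
  cases l with
  | nil => simp [switches]
  | cons x t =>
    simp only [switches]
    split_ifs <;> first | omega | simp_all

theorem switches_le_switches_cons (a : α) (l : List α) :
    switches l ≤ switches (a :: l) := by
  cases l with
  | nil => simp [switches]
  | cons x t => simp only [switches]; omega

-- The fixed head makes the induction go through: dropping an entry `b` after `a` loses at
-- most the switch between `a` and `b` (`switches_cons_le_add`).
theorem List.Sublist.switches_cons_le {l₁ l₂ : List α} (h : l₁.Sublist l₂) (a : α) :
    switches (a :: l₁) ≤ switches (a :: l₂) := by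
  induction h generalizing a with
  | slnil => rfl
  | @cons l₁ l₂ b _ ih =>
    calc switches (a :: l₁) ≤ (if a = b then 0 else 1) + switches (b :: l₁) :=
          switches_cons_le_add a b l₁
      _ ≤ (if a = b then 0 else 1) + switches (b :: l₂) := Nat.add_le_add_left (ih b) _
      _ = switches (a :: b :: l₂) := rfl
  | @cons_cons l₁ l₂ b _ ih =>
    simp only [switches]
    exact Nat.add_le_add_left (ih b) _

theorem List.Sublist.switches_le {l₁ l₂ : List α} (h : l₁.Sublist l₂) :
    switches l₁ ≤ switches l₂ := by
  induction h with
  | slnil => rfl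
  | cons b _ ih => exact ih.trans (switches_le_switches_cons b _)
  | cons_cons a h _ => exact h.switches_cons_le a

theorem switches_replicate_append (a : α) (m : ℕ) (l : List α) :
    switches (List.replicate (m + 1) a ++ l) = switches (a :: l) := by
  induction m with
  | zero => rfl
  | succ k ih =>
    simp only [List.replicate_succ, List.cons_append] at ih ⊢
    simpa [switches] using ih

theorem switches_map_of_injOn {β : Type*} [DecidableEq β] (f : α → β) :
    ∀ l : List α, (∀ x ∈ l, ∀ y ∈ l, f x = f y → x = y) → switches (l.map f) = switches l
  | [], _ => rfl
  | [_], _ => rfl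
  | a :: b :: t, hf => by
    have hab : f a = f b ↔ a = b :=
      ⟨hf a List.mem_cons_self b (List.mem_cons_of_mem a List.mem_cons_self), congrArg f⟩
    have ih := switches_map_of_injOn f (b :: t) fun x hx y hy =>
      hf x (List.mem_cons_of_mem a hx) y (List.mem_cons_of_mem a hy)
    simp only [List.map_cons, switches] at ih ⊢
    rw [ih, if_congr hab rfl rfl]

theorem Blowup.switches_cons_eq {l l' : List α} (hb : Blowup l l') (a : α) :
    switches (a :: l') = switches (a :: l) := by
  induction hb generalizing a with
  | nil => rfl
  | @cons b m l l' _ ih =>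
    rw [List.replicate_succ, List.cons_append, switches, ← List.cons_append,
      ← List.replicate_succ, switches_replicate_append, ih b]
    rfl

theorem Blowup.switches_eq {l l' : List α} (hb : Blowup l l') : switches l' = switches l := by
  cases hb with
  | nil => rfl
  | cons a m hb => rw [switches_replicate_append, hb.switches_cons_eq a]

end Switches

theorem Blowup.filter {α : Type*} (p : α → Bool) {l l' : List α} (hb : Blowup l l') :
    Blowup (l.filter p) (l'.filter p) := by
  induction hb with
  | nil => exact .nil
  | cons a m _ ih =>
    rw [List.filter_append, List.filter_replicate, List.filter_cons]
    by_cases hp : p a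
    · simpa only [hp, if_true] using .cons a m ih
    · simpa only [hp, if_false, Bool.false_eq_true, List.nil_append] using ih

section AltOn

variable {α : Type*} [DecidableEq α]

theorem Blowup.altOn_eq {l l' : List α} (hb : Blowup l l') (i j : α) :
    altOn l' i j = altOn l i j :=
  (hb.filter _).switches_eq

theorem altOn_filter (p : α → Bool) (l : List α) {i j : α} (hi : p i) (hj : p j) :
    altOn (l.filter p) i j = altOn l i j := by
  rw [altOn, altOn, List.filter_filter]
  congr 1
  refine List.filter_congr fun x _ => ?_
  by_cases hxi : x = i
  · simp [hxi, hi]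
  · by_cases hxj : x = j <;> simp [hxi, hxj, hj]

theorem altOn_le_altOn_map {β : Type*} [DecidableEq β] (f : α → β) (l : List α) {i j : α}
    (hij : f i ≠ f j) : altOn l i j ≤ altOn (l.map f) (f i) (f j) := by
  set lij := l.filter fun x => x == i || x == j
  have hmem : ∀ x ∈ lij, x = i ∨ x = j := fun x hx => by simpa using List.of_mem_filter hx
  have hinj : ∀ x ∈ lij, ∀ y ∈ lij, f x = f y → x = y := fun x hx y hy hxy => by
    rcases hmem x hx with rfl | rfl <;> rcases hmem y hy with rfl | rfl <;> simp_all [eq_comm]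
  have hfilter : (lij.map f).filter (fun y => y == f i || y == f j) = lij.map f := by
    refine List.filter_eq_self.2 fun y hy => ?_
    obtain ⟨x, hx, rfl⟩ := List.mem_map.1 hy
    rcases hmem x hx with rfl | rfl <;> simp
  calc altOn l i j = switches (lij.map f) := (switches_map_of_injOn f lij hinj).symm
    _ = switches ((lij.map f).filter fun y => y == f i || y == f j) := by rw [hfilter]
    _ ≤ altOn (l.map f) (f i) (f j) :=
      (((List.filter_sublist (l := l)).map f).filter _).switches_le

end AltOn

theorem complexity_subadditive_general
    {n N : ℕ} (β : Fin N → Fin n)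
    (f : List (Fin n)) (g : Fin n → List (Fin N)) (h : List (Fin N))
    (hmap : Blowup f (h.map β))
    (hblock : ∀ r : Fin n, Blowup (g r) (h.filter (fun x => β x == r))) :
    ∀ i j : Fin N, i ≠ j →
      (β i = β j → altOn h i j ≤ altOn (g (β i)) i j) ∧
      (β i ≠ β j → altOn h i j ≤ altOn f (β i) (β j)) := by
  intro i j _
  refine ⟨fun hij => ?_, fun hij => ?_⟩
  · rw [← (hblock (β i)).altOn_eq, altOn_filter _ _ (by simp) (by simp [hij])]
  · exact (altOn_le_altOn_map β h hij).trans (hmap.altOn_eq _ _).le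

/-- Subadditivity of complexity under operadic composition of sequences: if the
block projection of `h` is a blowup of `f` and the `r`-th block subsequence of `h`
is a blowup of `g r`, then pairwise alternations of the composite `h` are bounded
by the internal alternation of `g r` (same block) resp. by `alt_{rs}(f)`
(distinct blocks) — exactly as predicted by the complete graph operad. -/
theorem complexity_subadditive
    {n N : ℕ} (β : Fin N → Fin n)
    (f : List (Fin n)) (g : Fin n → List (Fin N)) (h : List (Fin N))
    (hg : ∀ (r : Fin n), ∀ x ∈ g r, β x = r)
    (hmap : Blowup f (h.map β))
    (hblock : ∀ r : Fin n, Blowup (g r) (h.filter (fun x => β x == r))) :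
    ∀ i j : Fin N, i ≠ j →
      (β i = β j → altOn h i j ≤ altOn (g (β i)) i j) ∧
      (β i ≠ β j → altOn h i j ≤ altOn f (β i) (β j)) :=
  complexity_subadditive_general β f g h hmap hblock
end

section
/- The n-fold filtration of the complete graph operad is multiplicative: if (μ,σ) ∈ K_p has all labels μ_{ij} ≤ n−1 with appropriate permutation conditions (i.e., lies in the n-th filtration stage K_p^{(n)}), and each (μ_r, σ_r) ∈ K_{i_r}^{(n)}, then the operadic composite Γ((μ,σ); (μ_1,σ_1), …, (μ_p,σ_p)) lies in K^{(n)}_{i_1+⋯+i_p}. -/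
/-!
STATEMENT 18: The `n`-th filtration of the complete graph operad is multiplicative:
if `(μ,σ) ∈ K_p^{(n)}` (all restrictions `φ*_{ij}` land in `K_2^{(n)}`, i.e. all
labels `μ_{ij} ≤ n−1`) and each `(μ_r,σ_r) ∈ K_{i_r}^{(n)}`, then the composite
`Γ((μ,σ); (μ_1,σ_1), …, (μ_p,σ_p))` lies in `K^{(n)}_{i_1+⋯+i_p}`.
-/

open Equiv Finset

/-- An element of the complete graph operad `K p`. -/
def KEl (p : ℕ) : Type := (Fin p → Fin p → ℕ) × Equiv.Perm (Fin p)

/-- The canonical (lexicographic, order-preserving) identification of a disjoint union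
of blocks `Fin (k i)` with `Fin (∑ i, k i)`. -/
noncomputable def finSigma {p : ℕ} (k : Fin p → ℕ) : (Σ i, Fin (k i)) ≃ Fin (∑ i, k i) :=
  (toLex : (Σ i, Fin (k i)) ≃ (Σₗ i, Fin (k i))).trans
    (monoEquivOfFin (Σₗ i : Fin p, Fin (k i))
      (by simp [Fintype.card_sigma])).symm.toEquiv

/-- The block permutation `σ(σ_1, …, σ_p)` of the permutation operad. -/
noncomputable def blockPerm {p : ℕ} (k : Fin p → ℕ) (σ : Equiv.Perm (Fin p))
    (σs : ∀ i, Equiv.Perm (Fin (k i))) : Equiv.Perm (Fin (∑ i, k i)) :=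
  ((finSigma k).symm.trans
    ((Equiv.sigmaCongrRight σs).trans
      ((Equiv.sigmaCongr σ
          (fun i => finCongr (congrArg k (σ.symm_apply_apply i).symm))).trans
        ((finSigma (fun j => k (σ.symm j))).trans
          (finCongr (Equiv.sum_comp σ.symm k))))))

/-- Operadic composition in the complete graph operad: internal labels within a block
come from that block's element, external labels between blocks from the outer one. -/
noncomputable def compK {p : ℕ} {k : Fin p → ℕ} (x : KEl p) (ys : ∀ i, KEl (k i)) :
    KEl (∑ i, k i) :=
  ⟨fun a b =>
    let pa := (finSigma k).symm a
    let pb := (finSigma k).symm b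
    if h : pa.1 = pb.1 then (ys pa.1).1 pa.2 (Fin.cast (congrArg k h.symm) pb.2)
    else x.1 pa.1 pb.1,
   blockPerm k x.2 (fun i => (ys i).2)⟩

/-- The `n`-th filtration stage `K_p^{(n)}`: all restrictions `φ*_{ij}` lie in
`K_2^{(n)}`, i.e. every label satisfies `μ_{ij} ≤ n − 1`. -/
def filtK {p : ℕ} (n : ℕ) (x : KEl p) : Prop :=
  ∀ i j : Fin p, i < j → x.1 i j ≤ n - 1

/- `finSigma` is monotone for the lexicographic order, so positions `a < b` of the composite
either lie in blocks `i < j`, where their label is the outer label `x.1 i j`, or in one block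
`i` with `a < b` inside it, where their label is a label of `ys i`. -/

theorem toLex_finSigma_symm_strictMono {p : ℕ} (k : Fin p → ℕ) :
    StrictMono fun a => toLex ((finSigma k).symm a) :=
  (monoEquivOfFin (Σₗ i : Fin p, Fin (k i)) (by simp [Fintype.card_sigma])).symm.symm.strictMono

theorem Sigma.fin_lt_cast_of_toLex_lt {p : ℕ} {k : Fin p → ℕ} {s t : Σ i, Fin (k i)}
    (hst : toLex s < toLex t) (h : s.1 = t.1) : s.2 < Fin.cast (congrArg k h.symm) t.2 := by
  obtain ⟨i, u⟩ := s
  obtain ⟨j, v⟩ := t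
  dsimp only at h ⊢
  subst h
  rcases Sigma.Lex.lt_def.mp hst with hij | ⟨_, huv⟩
  · exact absurd hij (lt_irrefl _)
  · exact huv

section compK

variable {p : ℕ} {k : Fin p → ℕ} (x : KEl p) (ys : ∀ i, KEl (k i)) {a b : Fin (∑ i, k i)}

theorem compK_label_of_block_ne
    (h : ((finSigma k).symm a).1 ≠ ((finSigma k).symm b).1) :
    (compK x ys).1 a b = x.1 ((finSigma k).symm a).1 ((finSigma k).symm b).1 :=
  dif_neg h

theorem compK_label_of_block_eq
    (h : ((finSigma k).symm a).1 = ((finSigma k).symm b).1) :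
    (compK x ys).1 a b = (ys ((finSigma k).symm a).1).1 ((finSigma k).symm a).2
      (Fin.cast (congrArg k h.symm) ((finSigma k).symm b).2) :=
  dif_pos h

end compK

/-- The filtration of the complete graph operad is multiplicative: composites of
elements of the `n`-th filtration stage lie in the `n`-th filtration stage. -/
theorem filtration_multiplicative (n p : ℕ) (k : Fin p → ℕ)
    (x : KEl p) (ys : ∀ i, KEl (k i))
    (hx : filtK n x) (hys : ∀ r, filtK n (ys r)) :
    filtK n (compK x ys) := by
  intro a b hab
  have hlex := toLex_finSigma_symm_strictMono k hab
  by_cases hblock : ((finSigma k).symm a).1 = ((finSigma k).symm b).1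
  · rw [compK_label_of_block_eq x ys hblock]
    exact hys _ _ _ (Sigma.fin_lt_cast_of_toLex_lt hlex hblock)
  · rw [compK_label_of_block_ne x ys hblock]
    rcases Sigma.Lex.lt_def.mp hlex with hlt | ⟨heq, _⟩
    · exact hx _ _ hlt
    · exact absurd heq hblock
end
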